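/- There exists a constant C₂ > 0 such that for all sufficiently small m > 0, ∑_{ℓ=1}^∞ (1/(2ℓ)) · (1/(πℓ)) · (1 - (1 - m²/(1+m²))^{2ℓ}) ≤ C₂ m² |log m|. -/

import Mathlib

/-!
By Bernoulli's inequality `1 - (1 - ξ)^(2ℓ) ≤ 2ℓξ`, so the `ℓ`-th term is at most `ξ / (πℓ)`; it is
also at most `1 / (2πℓ²)`. Using the first bound for `ℓ ≤ N` and the second beyond, with
`N = ⌈m⁻²⌉`, gives `(ξ / π)(1 + log N) + 1 / (2πN) ≤ (m² / π)(3/2 + log 2 + 2|log m|)`, which is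
`O(m² |log m|)` once `|log m| ≥ 1`.
-/

open Real Finset

lemma one_sub_one_sub_pow_nonneg {x : ℝ} (hx₀ : 0 ≤ x) (hx₁ : x ≤ 1) (k : ℕ) :
    0 ≤ 1 - (1 - x) ^ k :=
  sub_nonneg.2 (pow_le_one₀ (sub_nonneg.2 hx₁) (by linarith))

lemma one_sub_one_sub_pow_le_one {x : ℝ} (hx₁ : x ≤ 1) (k : ℕ) : 1 - (1 - x) ^ k ≤ 1 :=
  sub_le_self _ (pow_nonneg (sub_nonneg.2 hx₁) k)

lemma one_sub_one_sub_pow_le_mul {x : ℝ} (hx : x ≤ 2) (k : ℕ) : 1 - (1 - x) ^ k ≤ k * x := by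
  have bernoulli := one_add_mul_le_pow (a := -x) (by linarith) k
  rw [← sub_eq_add_neg] at bernoulli
  linarith

lemma sum_range_inv_succ_le_one_add_log (N : ℕ) :
    ∑ n ∈ range N, ((n : ℝ) + 1)⁻¹ ≤ 1 + log N := by
  simpa [harmonic] using harmonic_le_one_add_log N

lemma sum_range_inv_sq_nat_add_succ_le {N : ℕ} (hN : N ≠ 0) (K : ℕ) :
    ∑ n ∈ range K, ((((n + N : ℕ) : ℝ) + 1) ^ 2)⁻¹ ≤ (N : ℝ)⁻¹ := by
  have hreindex : ∀ k, ∑ n ∈ range k, ((((n + N : ℕ) : ℝ) + 1) ^ 2)⁻¹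
      = ∑ i ∈ Ioc N (N + k), ((i : ℝ) ^ 2)⁻¹ := by
    intro k
    induction k with
    | zero => simp
    | succ k ih =>
      rw [sum_range_succ, ih, ← add_assoc, sum_Ioc_succ_top (by omega)]
      push_cast
      ring_nf
  rw [hreindex]
  exact (sum_Ioc_inv_sq_le_sub hN (by omega)).trans (sub_le_self _ (by positivity))

theorem summable_and_tsum_le_of_le_inv_of_le_inv_sq {a : ℕ → ℝ} {c d : ℝ}
    (h₀ : ∀ n, 0 ≤ a n) (hc : ∀ n, a n ≤ c * ((n : ℝ) + 1)⁻¹)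
    (hd : ∀ n, a n ≤ d * (((n : ℝ) + 1) ^ 2)⁻¹) {N : ℕ} (hN : N ≠ 0) :
    Summable a ∧ ∑' n, a n ≤ c * (1 + log N) + d * (N : ℝ)⁻¹ := by
  have hc₀ : 0 ≤ c := by simpa using (h₀ 0).trans (hc 0)
  have hd₀ : 0 ≤ d := by simpa using (h₀ 0).trans (hd 0)
  have hsum : Summable a := by
    refine Summable.of_nonneg_of_le h₀ hd (Summable.mul_left d ?_)
    exact_mod_cast (summable_nat_add_iff 1).2 (Real.summable_nat_pow_inv.2 one_lt_two)
  refine ⟨hsum, ?_⟩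
  have hhead : ∑ n ∈ range N, a n ≤ c * (1 + log N) := by
    grw [sum_le_sum fun n _ => hc n, ← mul_sum, sum_range_inv_succ_le_one_add_log]
  have htail : ∑' n, a (n + N) ≤ d * (N : ℝ)⁻¹ := by
    refine Real.tsum_le_of_sum_range_le (fun n => h₀ _) fun K => ?_
    grw [sum_le_sum fun n _ => hd (n + N), ← mul_sum]
    exact mul_le_mul_of_nonneg_left (sum_range_inv_sq_nat_add_succ_le hN K) hd₀
  rw [← hsum.sum_add_tsum_nat_add N]
  exact add_le_add hhead htail

lemma log_natCeil_inv_le {x : ℝ} (hx₀ : 0 < x) (hx₂ : x < 2) :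
    log ⌈x⁻¹⌉₊ ≤ log 2 - log x := by
  have hceil : (⌈x⁻¹⌉₊ : ℝ) < 2 * x⁻¹ := Nat.ceil_lt_two_mul (by gcongr)
  have hpos : (0 : ℝ) < ⌈x⁻¹⌉₊ := by positivity
  rw [← log_div two_ne_zero hx₀.ne']
  exact log_le_log hpos (by rw [div_eq_mul_inv]; exact hceil.le)

/-- The term of index `ℓ + 1` of the series, at `ξ = m² / (1 + m²)`. -/
noncomputable def partitionRatioTerm (ξ : ℝ) (ℓ : ℕ) : ℝ :=
  (1 / (2 * ((ℓ : ℝ) + 1))) * (1 / (π * (ℓ + 1))) * (1 - (1 - ξ) ^ (2 * (ℓ + 1)))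

section partitionRatioTerm

variable {ξ : ℝ}

lemma partitionRatioTerm_nonneg (hξ₀ : 0 ≤ ξ) (hξ₁ : ξ ≤ 1) (ℓ : ℕ) :
    0 ≤ partitionRatioTerm ξ ℓ := by
  unfold partitionRatioTerm
  have := one_sub_one_sub_pow_nonneg hξ₀ hξ₁ (2 * (ℓ + 1))
  positivity

lemma partitionRatioTerm_le_inv (hξ : ξ ≤ 2) (ℓ : ℕ) :
    partitionRatioTerm ξ ℓ ≤ ξ / π * ((ℓ : ℝ) + 1)⁻¹ := by
  have hbound := one_sub_one_sub_pow_le_mul hξ (2 * (ℓ + 1))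
  unfold partitionRatioTerm
  grw [hbound]
  apply le_of_eq
  push_cast
  field_simp

lemma partitionRatioTerm_le_inv_sq (hξ : ξ ≤ 1) (ℓ : ℕ) :
    partitionRatioTerm ξ ℓ ≤ (2 * π)⁻¹ * (((ℓ : ℝ) + 1) ^ 2)⁻¹ := by
  unfold partitionRatioTerm
  grw [one_sub_one_sub_pow_le_one hξ]
  apply le_of_eq
  field_simp

end partitionRatioTerm

/-- There is `C₂ > 0` such that for all sufficiently small `m > 0`,
`∑_{ℓ=1}^∞ (1/(2ℓ)) (1/(πℓ)) (1 - (1 - m²/(1+m²))^{2ℓ}) ≤ C₂ m² |log m|`. -/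
theorem partition_ratio_bound :
    ∃ C₂ > (0 : ℝ), ∃ m₀ > (0 : ℝ), ∀ m : ℝ, 0 < m → m < m₀ →
      Summable (fun ℓ : ℕ =>
        (1 / (2 * ((ℓ : ℝ) + 1))) * (1 / (Real.pi * (ℓ + 1))) *
          (1 - (1 - m ^ 2 / (1 + m ^ 2)) ^ (2 * (ℓ + 1)))) ∧
      (∑' ℓ : ℕ, (1 / (2 * ((ℓ : ℝ) + 1))) * (1 / (Real.pi * (ℓ + 1))) *
          (1 - (1 - m ^ 2 / (1 + m ^ 2)) ^ (2 * (ℓ + 1))))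
        ≤ C₂ * m ^ 2 * |Real.log m| := by
  refine ⟨5 / π, by positivity, exp (-1), exp_pos _, fun m hm hm₀ => ?_⟩
  have hlog : log m < -1 := (log_lt_iff_lt_exp hm).2 hm₀
  have hm₁ : m ^ 2 < 1 := by
    have : m < 1 := hm₀.trans (exp_lt_one_iff.2 (by norm_num))
    nlinarith
  set ξ := m ^ 2 / (1 + m ^ 2)
  have hξ₀ : 0 ≤ ξ := by positivity
  have hξm : ξ ≤ m ^ 2 := div_le_self (by positivity) (by linarith [sq_nonneg m])
  set N := ⌈(m ^ 2)⁻¹⌉₊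
  have hN : N ≠ 0 := by positivity
  obtain ⟨hsum, hle⟩ := summable_and_tsum_le_of_le_inv_of_le_inv_sq
    (partitionRatioTerm_nonneg hξ₀ (by linarith)) (partitionRatioTerm_le_inv (by linarith))
    (partitionRatioTerm_le_inv_sq (by linarith)) hN
  refine ⟨hsum, hle.trans ?_⟩
  have hinvN : (N : ℝ)⁻¹ ≤ m ^ 2 := inv_le_of_inv_le₀ (by positivity) (Nat.le_ceil _)
  have hlogN : log N ≤ log 2 - 2 * log m := by
    have := log_natCeil_inv_le (x := m ^ 2) (by positivity) (by linarith)
    rwa [log_pow, Nat.cast_ofNat] at this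
  have hlogN₀ : 0 ≤ log N := log_natCast_nonneg N
  have hlog2 : log 2 < 1 := by linarith [log_two_lt_d9]
  rw [abs_of_neg (by linarith)]
  calc ξ / π * (1 + log N) + (2 * π)⁻¹ * (N : ℝ)⁻¹
      ≤ m ^ 2 / π * (1 + (log 2 - 2 * log m)) + (2 * π)⁻¹ * m ^ 2 := by gcongr
    _ ≤ 5 / π * m ^ 2 * -log m := by
      field_simp
      nlinarith [sq_nonneg m, mul_pos hm hm]
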